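/- Let $E\subset\Pi^N_k$ be a local minimizer of $\mathcal{F}_k^\gamma$ under volume constraint, and suppose that there exists $\Lambda > 0$ such that $E$ solves the unconstrained penalized problem $\min\{\mathcal{P}_k(F) + \gamma\mathcal{NL}_k(F) + \Lambda|\fint u_k^F - m| : \alpha(E,F)\leq\delta/2\}$. Then $E$ is an $(\omega, r)$-minimizer of the area functional with $\omega = c_0\gamma + \Lambda$ for any $r > 0$ with $\omega_N r^N \leq \delta/2$: for every ball $B_r(x)$ and every $F$ with $E\triangle F\subset\subset B_r(x)$, $\mathcal{P}_k(E) \leq \mathcal{P}_k(F) + \omega|E\triangle F|$. -/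

import Mathlib

open MeasureTheory Metric Filter
open scoped RealInnerProductSpace ENNReal
open Classical

noncomputable section

/-- The Euclidean space `ℝ^N`, on which we consider `L`-periodic functions/sets:
this models the flat torus of side `L`. -/
abbrev Euc (N : ℕ) := EuclideanSpace ℝ (Fin N)

/-- A fundamental domain (periodicity cell) of side `L` for the flat torus. -/
def box (N : ℕ) (L : ℝ) : Set (Euc N) := {x | ∀ i, x i ∈ Set.Ico (0 : ℝ) L}

/-- `u^E = χ_E - χ_{Eᶜ}`. -/
def uE {N : ℕ} (E : Set (Euc N)) (x : Euc N) : ℝ := if x ∈ E then 1 else -1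

/-- The Laplacian `Δ f = ∑ ∂²f/∂xᵢ²`. -/
def lap {N : ℕ} (f : Euc N → ℝ) (x : Euc N) : ℝ :=
  ∑ i, fderiv ℝ (fun y => fderiv ℝ f y (EuclideanSpace.single i 1)) x
    (EuclideanSpace.single i 1)

/-- `f` is `L`-periodic in each coordinate direction. -/
def IsPer {N : ℕ} (L : ℝ) (f : Euc N → ℝ) : Prop :=
  ∀ (x : Euc N) (z : Fin N → ℤ), f (show Euc N from WithLp.toLp 2 (fun i => x i + (z i : ℝ) * L)) = f x

open scoped symmDiff

/-! A competitor `F` with `E ∆ F` inside a ball of volume at most `δ / 2` is admissible in the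
penalized problem, because `α(E, F) ≤ |E ∆ F|`. Comparing with it, replacing `E` by `F` changes
the nonlocal term by at most `c₀ γ |E ∆ F|` and the volume penalization by at most
`Λ |E ∆ F|`. -/

theorem toReal_measure_le_of_subset_ball {X : Type*} [NormedAddCommGroup X] [ProperSpace X]
    [MeasurableSpace X] [BorelSpace X] (μ : Measure X) [μ.IsAddHaarMeasure]
    {s : Set X} {x : X} {r : ℝ} (hs : s ⊆ ball x r) :
    (μ s).toReal ≤ (μ (ball 0 r)).toReal := by
  rw [← Measure.addHaar_ball_center μ x r]
  exact ENNReal.toReal_mono measure_ball_lt_top.ne (measure_mono hs)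

theorem penalized_minimizer_is_omega_minimizer_general
    {N : ℕ} (P NL : Set (Euc N) → ℝ)
    (alphaD : Set (Euc N) → Set (Euc N) → ℝ)
    (mint : Set (Euc N) → ℝ) (γ c0 Λ δ m : ℝ)
    (hγ : 0 ≤ γ) (hΛ : 0 < Λ)
    (E : Set (Euc N)) (hm : mint E = m)
    (hLip : ∀ A B : Set (Euc N), |NL A - NL B| ≤ c0 * (volume (A ∆ B)).toReal)
    (hpen : ∀ F : Set (Euc N), |mint F - mint E| ≤ (volume (E ∆ F)).toReal)
    (hα : ∀ F : Set (Euc N), alphaD E F ≤ (volume (E ∆ F)).toReal)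
    (hmin : ∀ F : Set (Euc N), MeasurableSet F → alphaD E F ≤ δ / 2 →
        P E + γ * NL E ≤ P F + γ * NL F + Λ * |mint F - m|) :
    ∀ r > (0:ℝ), (volume (ball (0 : Euc N) r)).toReal ≤ δ / 2 →
      ∀ (x : Euc N) (F : Set (Euc N)), MeasurableSet F → E ∆ F ⊆ ball x r →
        P E ≤ P F + (c0 * γ + Λ) * (volume (E ∆ F)).toReal := by
  intro r _ hrδ x F hF hsub
  set v := (volume (E ∆ F)).toReal
  have hNL : NL F - NL E ≤ c0 * v := by
    simpa only [symmDiff_comm F E] using (le_abs_self _).trans (hLip F E)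
  have hmint : |mint F - m| ≤ v := hm ▸ hpen F
  have hαF : alphaD E F ≤ δ / 2 :=
    (hα F).trans ((toReal_measure_le_of_subset_ball volume hsub).trans hrδ)
  calc P E ≤ P F + γ * (NL F - NL E) + Λ * |mint F - m| := by linarith [hmin F hF hαF]
    _ ≤ P F + γ * (c0 * v) + Λ * v := by gcongr
    _ = P F + (c0 * γ + Λ) * v := by ring

/-- If `E` solves the unconstrained penalized problem
`min { 𝒫 + γ𝒩ℒ + Λ|⨍u - m| : α(·,E) ≤ δ/2 }`, then `E` is an `(ω, r)`-minimizer of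
the area functional with `ω = c₀γ + Λ` for any `r` with `ω_N r^N ≤ δ/2`: for every
ball `B_r(x)` and every `F` with `E △ F ⊂⊂ B_r(x)`,
`𝒫(E) ≤ 𝒫(F) + ω |E △ F|`. The Lipschitz property of `𝒩ℒ`, the bound on the volume
penalization, and `α(E,F) ≤ |E △ F|` are hypotheses. -/
theorem penalized_minimizer_is_omega_minimizer
    {N : ℕ} (P NL : Set (Euc N) → ℝ)
    (alphaD : Set (Euc N) → Set (Euc N) → ℝ)
    (mint : Set (Euc N) → ℝ) (γ c0 Λ δ m : ℝ)
    (hγ : 0 ≤ γ) (hc0 : 0 ≤ c0) (hΛ : 0 < Λ) (hδ : 0 < δ)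
    (E : Set (Euc N)) (hm : mint E = m)
    (hLip : ∀ A B : Set (Euc N), |NL A - NL B| ≤ c0 * (volume (A ∆ B)).toReal)
    (hpen : ∀ F : Set (Euc N), |mint F - mint E| ≤ (volume (E ∆ F)).toReal)
    (hα : ∀ F : Set (Euc N), alphaD E F ≤ (volume (E ∆ F)).toReal)
    (hmin : ∀ F : Set (Euc N), MeasurableSet F → alphaD E F ≤ δ / 2 →
        P E + γ * NL E ≤ P F + γ * NL F + Λ * |mint F - m|) :
    ∀ r > (0:ℝ), (volume (ball (0 : Euc N) r)).toReal ≤ δ / 2 →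
      ∀ (x : Euc N) (F : Set (Euc N)), MeasurableSet F → E ∆ F ⊆ ball x r →
        P E ≤ P F + (c0 * γ + Λ) * (volume (E ∆ F)).toReal :=
  penalized_minimizer_is_omega_minimizer_general P NL alphaD mint γ c0 Λ δ m hγ hΛ E hm hLip hpen hα
    hmin
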